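/- Let K be a field, m, σ ≥ 1, E ∈ K^{m×σ}, J ∈ K^{σ×σ}, and s ∈ ℤ^m. Then there exists exactly one matrix P ∈ K[X]^{m×m} in s-Popov form whose rows form a basis of the K[X]-module of interpolants for (E,J). -/

import Mathlib

open Polynomial Matrix

/-- Degree of a polynomial as an element of `WithBot ℤ`, with `degZ 0 = ⊥`. -/
noncomputable def degZ {K : Type*} [Field K] (p : Polynomial K) : WithBot ℤ :=
  p.degree.map (fun n : ℕ => (n : ℤ))

/-- The `s`-degree of a row vector `p`: `max_j (deg p_j + s_j)`. -/
noncomputable def sdeg {K : Type*} [Field K] {ι : Type*} [Fintype ι]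
    (s : ι → ℤ) (p : ι → Polynomial K) : WithBot ℤ :=
  Finset.univ.sup fun j => degZ (p j) + (s j : WithBot ℤ)

/-- `j` is the `s`-pivot index of the row `p`: the largest index at which the
`s`-degree of `p` is attained. -/
def IsPivotIndex {K : Type*} [Field K] {ι : Type*} [Fintype ι] [LinearOrder ι]
    (s : ι → ℤ) (p : ι → Polynomial K) (j : ι) : Prop :=
  degZ (p j) + (s j : WithBot ℤ) = sdeg s p ∧
    ∀ k, j < k → degZ (p k) + (s k : WithBot ℤ) ≠ sdeg s p

/-- `P` is in `s`-Popov form: it is nonsingular, the `s`-pivot entries are monic and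
on the diagonal, and in each column the nonpivot entries have degree less than
the pivot entry. -/
def IsPopov {K : Type*} [Field K] {m : ℕ} (s : Fin m → ℤ)
    (P : Matrix (Fin m) (Fin m) (Polynomial K)) : Prop :=
  P.det ≠ 0 ∧ (∀ i, IsPivotIndex s (P i) i) ∧ (∀ i, (P i i).Monic) ∧
    ∀ i j, i ≠ j → (P i j).degree < (P j j).degree

/-- `p` is an interpolant for `(E, J)`: `∑ i, (row i of E) ⋅ (p i)(J) = 0`. -/
def IsInterpolant {K : Type*} [Field K] {ι n : Type*} [Fintype ι] [Fintype n] [DecidableEq n]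
    (E : Matrix ι n K) (J : Matrix n n K) (p : ι → Polynomial K) : Prop :=
  ∑ i, Matrix.vecMul (E i) (Polynomial.aeval J (p i)) = 0

/-- `P` is an interpolation basis for `(E, J)`: its rows form a basis of the
`K[X]`-module of interpolants for `(E, J)`. -/
def IsInterpolationBasis {K : Type*} [Field K] {ι n : Type*} [Fintype ι] [Fintype n]
    [DecidableEq n] (E : Matrix ι n K) (J : Matrix n n K)
    (P : Matrix ι ι (Polynomial K)) : Prop :=
  LinearIndependent (Polynomial K) (fun i => P i) ∧
    (Submodule.span (Polynomial K) (Set.range fun i => P i) : Set (ι → Polynomial K))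
      = {p | IsInterpolant E J p}

/-- The product `Q ⋅ E`: the matrix over `K` whose `i`-th row is `∑ j, (E j) ⋅ (Q i j)(J)`. -/
noncomputable def polMulMat {K : Type*} [Field K] {κ ι n : Type*} [Fintype κ] [Fintype ι]
    [Fintype n] [DecidableEq n]
    (Q : Matrix κ ι (Polynomial K)) (E : Matrix ι n K) (J : Matrix n n K) : Matrix κ n K :=
  fun i => ∑ j, Matrix.vecMul (E j) (Polynomial.aeval J (Q i j))

/-- The `s`-leading matrix of `R`: if row `i` has `s`-degree `d`, its `(i,j)` entry is
the coefficient of degree `d - s j` in `R i j` (and `0` if row `i` is zero). -/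
noncomputable def leadingMatrix {K : Type*} [Field K] {ι : Type*} [Fintype ι]
    (s : ι → ℤ) (R : Matrix ι ι (Polynomial K)) : Matrix ι ι K := fun i j =>
  WithBot.recBotCoe 0
    (fun d => if 0 ≤ d - s j then (R i j).coeff (d - s j).toNat else 0)
    (sdeg s (R i))


/-!
The interpolants form a submodule `M` containing `χ_J · e_j` for every `j`, so for each `j` there
are vectors of `M` with `s`-pivot index `j`; let `δ j` be the least `s`-degree of such a vector.
Rows with their pivots on the diagonal satisfy the predictable degree property, and any vector can
be reduced modulo them until each column `l` has shifted degree below the degree of row `l`. A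
reduced nonzero vector of `M` would have a pivot of degree below the minimum `δ`, so reduced vectors
of `M` vanish. Reducing `X ^ (δ i - s i) e_i` modulo minimal rows gives the rows of the `s`-Popov
basis. Two `s`-Popov bases of `M` both have pivot degrees `δ`, so the difference of corresponding
rows is reduced, hence zero.
-/

section

variable {K : Type*} [Field K]

lemma degZ_eq_bot_iff {p : K[X]} : degZ p = ⊥ ↔ p = 0 := by
  simp [degZ]

lemma degZ_of_ne_zero {p : K[X]} (hp : p ≠ 0) : degZ p = (p.natDegree : ℤ) := by
  simp [degZ, degree_eq_natDegree hp]

lemma le_degZ_add_of_coeff_ne_zero {p : K[X]} {n : ℕ} (h : p.coeff n ≠ 0) (a : ℤ) :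
    (((n : ℤ) + a : ℤ) : WithBot ℤ) ≤ degZ p + a := by
  rw [degZ_of_ne_zero (fun h0 => h (by simp [h0])), ← WithBot.coe_add, WithBot.coe_le_coe]
  have := le_natDegree_of_ne_zero h
  omega

lemma degZ_add_le_iff {p : K[X]} {a : ℤ} {D : WithBot ℤ} :
    degZ p + a ≤ D ↔ ∀ n : ℕ, p.coeff n ≠ 0 → (((n : ℤ) + a : ℤ) : WithBot ℤ) ≤ D := by
  refine ⟨fun h n hn => (le_degZ_add_of_coeff_ne_zero hn a).trans h, fun h => ?_⟩
  rcases eq_or_ne p 0 with rfl | hp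
  · simp [degZ]
  · rw [degZ_of_ne_zero hp, ← WithBot.coe_add]
    exact h _ (by simpa using hp)

lemma degZ_add_lt_iff {p : K[X]} {a d : ℤ} :
    degZ p + a < d ↔ ∀ n : ℕ, p.coeff n ≠ 0 → (n : ℤ) + a < d := by
  refine ⟨fun h n hn => WithBot.coe_lt_coe.mp ((le_degZ_add_of_coeff_ne_zero hn a).trans_lt h),
    fun h => ?_⟩
  rcases eq_or_ne p 0 with rfl | hp
  · simp [degZ]
  · rw [degZ_of_ne_zero hp, ← WithBot.coe_add, WithBot.coe_lt_coe]
    exact h _ (by simpa using hp)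

lemma degZ_add_lt_iff_degree_lt {p : K[X]} {n : ℕ} {a : ℤ} :
    degZ p + a < ((n : ℤ) + a : ℤ) ↔ p.degree < n := by
  rw [degZ_add_lt_iff, degree_lt_iff_coeff_zero]
  refine forall_congr' fun k => ?_
  constructor
  · intro h hk
    by_contra hne
    have := h hne
    omega
  · intro h hk
    by_contra hlt
    exact hk (h (by omega))

lemma exists_coeff_ne_zero_of_coeff_mul_ne_zero {p q : K[X]} {n : ℕ} (h : (p * q).coeff n ≠ 0) :
    ∃ a b, a + b = n ∧ p.coeff a ≠ 0 ∧ q.coeff b ≠ 0 := by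
  rw [coeff_mul] at h
  obtain ⟨⟨a, b⟩, hab, hne⟩ := Finset.exists_ne_zero_of_sum_ne_zero h
  exact ⟨a, b, Finset.HasAntidiagonal.mem_antidiagonal.mp hab, left_ne_zero_of_mul hne, right_ne_zero_of_mul hne⟩

section RowDegree

variable {m : ℕ} {s : Fin m → ℤ} {v : Fin m → K[X]} {i l : Fin m}

lemma degZ_add_le_sdeg (s : Fin m → ℤ) (v : Fin m → K[X]) (l : Fin m) :
    degZ (v l) + s l ≤ sdeg s v :=
  Finset.le_sup (f := fun l => degZ (v l) + (s l : WithBot ℤ)) (Finset.mem_univ l)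

lemma sdeg_le_iff {D : WithBot ℤ} : sdeg s v ≤ D ↔ ∀ l, degZ (v l) + s l ≤ D := by
  simp [sdeg]

lemma sdeg_eq_bot_iff : sdeg s v = ⊥ ↔ v = 0 := by
  rw [← le_bot_iff, sdeg_le_iff, funext_iff]
  simp [degZ_eq_bot_iff]

lemma add_le_sdeg_of_coeff_ne_zero {n : ℕ} (h : (v l).coeff n ≠ 0) :
    (((n : ℤ) + s l : ℤ) : WithBot ℤ) ≤ sdeg s v :=
  (le_degZ_add_of_coeff_ne_zero h _).trans (degZ_add_le_sdeg s v l)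

lemma exists_isPivotIndex (hv : v ≠ 0) : ∃ i, IsPivotIndex s v i := by
  have : Nonempty (Fin m) := by
    by_contra h
    exact hv (funext fun l => (not_nonempty_iff.mp h).elim l)
  obtain ⟨j, -, hj⟩ := Finset.exists_mem_eq_sup Finset.univ Finset.univ_nonempty
    (fun l => degZ (v l) + (s l : WithBot ℤ))
  let attained := Finset.univ.filter fun l => degZ (v l) + (s l : WithBot ℤ) = sdeg s v
  have hne : attained.Nonempty := ⟨j, by simp [attained, sdeg, hj]⟩
  refine ⟨attained.max' hne, (Finset.mem_filter.mp (attained.max'_mem hne)).2, fun k hk hks => ?_⟩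
  exact hk.not_ge (attained.le_max' k (by simp [attained, hks]))

lemma IsPivotIndex.unique {j : Fin m} (hi : IsPivotIndex s v i) (hj : IsPivotIndex s v j) :
    i = j := by
  rcases lt_trichotomy i j with h | h | h
  · exact absurd hj.1 (hi.2 j h)
  · exact h
  · exact absurd hi.1 (hj.2 i h)

lemma IsPivotIndex.sdeg_eq (hi : IsPivotIndex s v i) (hvi : v i ≠ 0) :
    sdeg s v = (((v i).natDegree : ℤ) + s i : ℤ) := by
  rw [← hi.1, degZ_of_ne_zero hvi, WithBot.coe_add]

lemma IsPivotIndex.apply_ne_zero (hi : IsPivotIndex s v i) (hv : v ≠ 0) : v i ≠ 0 := by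
  intro h
  have := hi.1
  rw [h, degZ_eq_bot_iff.mpr rfl, WithBot.bot_add, eq_comm, sdeg_eq_bot_iff] at this
  exact hv this

lemma IsPivotIndex.add_lt_sdeg_of_coeff_ne_zero (hi : IsPivotIndex s v i) (hl : i < l) {n : ℕ}
    (h : (v l).coeff n ≠ 0) : (((n : ℤ) + s l : ℤ) : WithBot ℤ) < sdeg s v :=
  (le_degZ_add_of_coeff_ne_zero h _).trans_lt
    ((degZ_add_le_sdeg s v l).lt_of_ne (hi.2 l hl))

lemma isPivotIndex_of_coeff {d : ℤ} (hle : ∀ l n, (v l).coeff n ≠ 0 → (n : ℤ) + s l ≤ d)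
    (hlt : ∀ l, i < l → ∀ n, (v l).coeff n ≠ 0 → (n : ℤ) + s l < d) {n₀ : ℕ}
    (hn₀ : (v i).coeff n₀ ≠ 0) (hd : (n₀ : ℤ) + s i = d) :
    IsPivotIndex s v i ∧ sdeg s v = d := by
  have hsdeg : sdeg s v ≤ d := sdeg_le_iff.mpr fun l =>
    degZ_add_le_iff.mpr fun n hn => WithBot.coe_le_coe.mpr (hle l n hn)
  have hi : degZ (v i) + s i = d :=
    le_antisymm ((degZ_add_le_sdeg s v i).trans hsdeg) (hd ▸ le_degZ_add_of_coeff_ne_zero hn₀ _)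
  have hsd : sdeg s v = d := le_antisymm hsdeg (hi ▸ degZ_add_le_sdeg s v i)
  refine ⟨⟨hi.trans hsd.symm, fun l hl => ?_⟩, hsd⟩
  rw [hsd]
  exact (degZ_add_lt_iff.mpr (hlt l hl)).ne

end RowDegree

section OrderedWeakPopov

variable {m : ℕ} {s : Fin m → ℤ} {Q : Fin m → Fin m → K[X]}

def IsOrderedWeakPopov (s : Fin m → ℤ) (Q : Fin m → Fin m → K[X]) : Prop :=
  ∀ i, IsPivotIndex s (Q i) i ∧ Q i i ≠ 0

def rowDeg (s : Fin m → ℤ) (Q : Fin m → Fin m → K[X]) (i : Fin m) : ℤ :=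
  (Q i i).natDegree + s i

lemma IsOrderedWeakPopov.sdeg_eq (hQ : IsOrderedWeakPopov s Q) (i : Fin m) :
    sdeg s (Q i) = rowDeg s Q i :=
  (hQ i).1.sdeg_eq (hQ i).2

lemma IsOrderedWeakPopov.coeff_le (hQ : IsOrderedWeakPopov s Q) {j l : Fin m} {n : ℕ}
    (h : (Q j l).coeff n ≠ 0) : (n : ℤ) + s l ≤ rowDeg s Q j := by
  have := add_le_sdeg_of_coeff_ne_zero (s := s) h
  rwa [hQ.sdeg_eq, WithBot.coe_le_coe] at this

lemma IsOrderedWeakPopov.coeff_lt (hQ : IsOrderedWeakPopov s Q) {j l : Fin m} (hjl : j < l)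
    {n : ℕ} (h : (Q j l).coeff n ≠ 0) : (n : ℤ) + s l < rowDeg s Q j := by
  have := (hQ j).1.add_lt_sdeg_of_coeff_ne_zero hjl h
  rwa [hQ.sdeg_eq, WithBot.coe_lt_coe] at this

/-- The predictable degree property. -/
theorem IsOrderedWeakPopov.isPivotIndex_sum_smul (hQ : IsOrderedWeakPopov s Q)
    {c : Fin m → K[X]} {i : Fin m} (hi : IsPivotIndex (rowDeg s Q) c i) (hci : c i ≠ 0) :
    IsPivotIndex s (∑ j, c j • Q j) i ∧
      sdeg s (∑ j, c j • Q j) = (((c i).natDegree : ℤ) + rowDeg s Q i : ℤ) := by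
  set d : ℤ := (c i).natDegree + rowDeg s Q i
  have hsd := hi.sdeg_eq hci
  have hc_le : ∀ j n, (c j).coeff n ≠ 0 → (n : ℤ) + rowDeg s Q j ≤ d := fun j n hn =>
    WithBot.coe_le_coe.mp (hsd ▸ add_le_sdeg_of_coeff_ne_zero hn)
  have hc_lt : ∀ j, i < j → ∀ n, (c j).coeff n ≠ 0 → (n : ℤ) + rowDeg s Q j < d :=
    fun j hij n hn => WithBot.coe_lt_coe.mp (hsd ▸ hi.add_lt_sdeg_of_coeff_ne_zero hij hn)
  have hterm : ∀ j l n, (c j * Q j l).coeff n ≠ 0 → (n : ℤ) + s l ≤ d ∧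
      (i < j ∨ j < l → (n : ℤ) + s l < d) := by
    intro j l n hn
    obtain ⟨a, b, rfl, ha, hb⟩ := exists_coeff_ne_zero_of_coeff_mul_ne_zero hn
    have hQle := hQ.coeff_le hb
    refine ⟨by push_cast; linarith [hc_le j a ha], ?_⟩
    rintro (hij | hjl)
    · push_cast; linarith [hc_lt j hij a ha]
    · push_cast; linarith [hc_le j a ha, hQ.coeff_lt hjl hb]
  have hcoeff : ∀ l n, ((∑ j, c j • Q j) l).coeff n = ∑ j, (c j * Q j l).coeff n := by
    intro l n
    simp [Finset.sum_apply]
  have hpiv : ((∑ j, c j • Q j) i).coeff ((c i).natDegree + (Q i i).natDegree) ≠ 0 := by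
    rw [hcoeff, Finset.sum_eq_single i, coeff_mul_degree_add_degree]
    · exact mul_ne_zero (leadingCoeff_ne_zero.mpr hci) (leadingCoeff_ne_zero.mpr (hQ i).2)
    · intro j _ hji
      by_contra hne
      have := (hterm j i _ hne).2 (lt_or_gt_of_ne hji).symm
      simp only [d, rowDeg, Nat.cast_add] at this
      linarith
    · simp
  refine isPivotIndex_of_coeff (fun l n hn => ?_) (fun l hil n hn => ?_) hpiv
    (by simp [d, rowDeg]; ring)
  · rw [hcoeff] at hn
    obtain ⟨j, -, hj⟩ := Finset.exists_ne_zero_of_sum_ne_zero hn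
    exact (hterm j l n hj).1
  · rw [hcoeff] at hn
    obtain ⟨j, -, hj⟩ := Finset.exists_ne_zero_of_sum_ne_zero hn
    exact (hterm j l n hj).2 ((lt_or_ge i j).imp id fun hji => hji.trans_lt hil)

lemma IsOrderedWeakPopov.sum_smul_ne_zero (hQ : IsOrderedWeakPopov s Q) {c : Fin m → K[X]}
    (hc : c ≠ 0) : ∑ j, c j • Q j ≠ 0 := by
  obtain ⟨i, hi⟩ := exists_isPivotIndex (s := rowDeg s Q) hc
  rw [Ne, ← sdeg_eq_bot_iff (s := s), (hQ.isPivotIndex_sum_smul hi (hi.apply_ne_zero hc)).2]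
  exact WithBot.coe_ne_bot

lemma IsOrderedWeakPopov.linearIndependent (hQ : IsOrderedWeakPopov s Q) :
    LinearIndependent K[X] Q := by
  rw [Fintype.linearIndependent_iff]
  intro c hc
  by_contra! h
  exact hQ.sum_smul_ne_zero (Function.ne_iff.mpr h) hc

lemma IsOrderedWeakPopov.det_ne_zero {P : Matrix (Fin m) (Fin m) K[X]}
    (hP : IsOrderedWeakPopov s P) : P.det ≠ 0 := by
  rw [Ne, ← Matrix.exists_vecMul_eq_zero_iff]
  rintro ⟨c, hc, hcP⟩
  exact hP.sum_smul_ne_zero hc (by rw [← Matrix.vecMul_eq_sum]; exact hcP)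

end OrderedWeakPopov

section Division

variable {m : ℕ} {s : Fin m → ℤ} {Q : Fin m → Fin m → K[X]}

lemma strictMono_lexWeight (m : ℕ) :
    StrictMono fun p : ℤ ×ₗ Fin m => (ofLex p).1 * m + (ofLex p).2 := by
  rintro ⟨e, l⟩ ⟨e', l'⟩ h
  show e * m + l < e' * m + l'
  rcases Prod.Lex.lt_iff.mp h with h | ⟨h, h'⟩
  · have : (e + 1) * m ≤ e' * m := Int.mul_le_mul_of_nonneg_right h (by positivity)
    have := l.isLt
    linarith
  · change e = e' at h
    change l < l' at h'
    rw [h]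
    exact_mod_cast Int.add_lt_add_left (Int.ofNat_lt.mpr h') _

lemma IsOrderedWeakPopov.exists_cancel (hQ : IsOrderedWeakPopov s Q) (v : Fin m → K[X])
    {n : ℕ} {l : Fin m} (hn : rowDeg s Q l ≤ n + s l) :
    ∃ c : K[X], ((v - c • Q l) l).coeff n = 0 ∧ ∀ n' l', ((c • Q l) l').coeff n' ≠ 0 →
      toLex ((n' : ℤ) + s l', l') ≤ toLex ((n : ℤ) + s l, l) := by
  obtain ⟨k, rfl⟩ : ∃ k, n = k + (Q l l).natDegree :=
    ⟨n - (Q l l).natDegree, by simp only [rowDeg] at hn; omega⟩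
  refine ⟨C ((v l).coeff (k + (Q l l).natDegree) / (Q l l).leadingCoeff) * X ^ k, ?_,
    fun n' l' h => ?_⟩
  · simp [mul_assoc, coeff_X_pow_mul', leadingCoeff_ne_zero.mpr (hQ l).2]
  · simp only [Pi.smul_apply, smul_eq_mul, mul_assoc, coeff_C_mul, coeff_X_pow_mul'] at h
    split_ifs at h with hkn
    · have hQ' := right_ne_zero_of_mul h
      rw [Prod.Lex.toLex_le_toLex]
      rcases lt_or_ge l l' with hll | hll
      · have := hQ.coeff_lt hll hQ'
        simp only [rowDeg] at this
        left
        push_cast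
        omega
      · have := hQ.coeff_le hQ'
        simp only [rowDeg] at this
        rcases (show (n' : ℤ) + s l' ≤ ↑(k + (Q l l).natDegree) + s l by push_cast; omega).lt_or_eq
          with hlt | heq
        · exact Or.inl hlt
        · exact Or.inr ⟨heq, hll⟩
    · simp at h

/-- `(e, l) ↦ e * m + l` embeds the positions, ordered by shifted degree and then column, into
`ℤ`; the coefficients that are not yet reduced all sit at positions of weight at least `B * m`. -/
lemma IsOrderedWeakPopov.exists_reduced_of_weight_lt (hQ : IsOrderedWeakPopov s Q) {B : ℤ}
    (hB : ∀ l, B ≤ rowDeg s Q l) (N : ℕ) (v : Fin m → K[X])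
    (hv : ∀ n l, (v l).coeff n ≠ 0 → rowDeg s Q l ≤ n + s l →
      ((n : ℤ) + s l) * m + l < B * m + N) :
    ∃ u ∈ Submodule.span K[X] (Set.range Q),
      ∀ l n, ((v - u) l).coeff n ≠ 0 → (n : ℤ) + s l < rowDeg s Q l := by
  have hweight := strictMono_lexWeight m
  induction N generalizing v with
  | zero =>
    refine ⟨0, zero_mem _, fun l n hn => ?_⟩
    by_contra! hge
    rw [sub_zero] at hn
    have := hv n l hn hge
    have : B * m ≤ (n + s l) * m := Int.mul_le_mul_of_nonneg_right ((hB l).trans hge) (by positivity)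
    push_cast at *
    linarith
  | succ N ih =>
    by_cases htop : ∃ n l, (v l).coeff n ≠ 0 ∧ rowDeg s Q l ≤ n + s l ∧
        ((n : ℤ) + s l) * m + l = B * m + N
    swap
    · refine ih v fun n l hn hnl => lt_of_le_of_ne ?_ fun h => htop ⟨n, l, hn, hnl, h⟩
      have := hv n l hn hnl
      push_cast at this
      omega
    obtain ⟨n, l, hn, hnl, hw⟩ := htop
    obtain ⟨c, hc0, hcle⟩ := hQ.exists_cancel v hnl
    obtain ⟨u, hu, hred⟩ := ih (v - c • Q l) fun n' l' hn' hnl' => by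
      rw [← hw]
      refine hweight (a := toLex ((n' : ℤ) + s l', l')) (b := toLex ((n : ℤ) + s l, l))
        (lt_of_le_of_ne ?_ fun heq => ?_)
      · rw [Pi.sub_apply, coeff_sub] at hn'
        by_cases hv' : (v l').coeff n' = 0
        · exact hcle n' l' (by simpa [hv'] using hn')
        · refine hweight.le_iff_le.mp ?_
          have := hv n' l' hv' hnl'
          simp only [ofLex_toLex]
          push_cast at this
          omega
      · simp only [toLex_inj, Prod.mk.injEq] at heq
        obtain ⟨he, rfl⟩ := heq
        obtain rfl : n' = n := by omega
        exact hn' hc0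
    refine ⟨u + c • Q l, add_mem hu (Submodule.smul_mem _ c (Submodule.subset_span ⟨l, rfl⟩)), ?_⟩
    rwa [sub_add_eq_sub_sub_swap]

theorem IsOrderedWeakPopov.exists_reduced (hQ : IsOrderedWeakPopov s Q) (v : Fin m → K[X]) :
    ∃ u ∈ Submodule.span K[X] (Set.range Q), ∀ l, degZ ((v - u) l) + s l < rowDeg s Q l := by
  obtain ⟨B, hB⟩ := (Set.finite_range (rowDeg s Q)).bddBelow
  obtain ⟨D, hD⟩ := (Set.finite_range fun l => ((v l).natDegree : ℤ) + s l).bddAbove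
  obtain ⟨u, hu, hred⟩ := hQ.exists_reduced_of_weight_lt (fun l => hB ⟨l, rfl⟩)
    ((D + 1 - B) * m).toNat v fun n l hn _ => by
      have hlD : ((v l).natDegree : ℤ) + s l ≤ D := hD ⟨l, rfl⟩
      have hnD : (n : ℤ) + s l ≤ D := by have := le_natDegree_of_ne_zero hn; omega
      have := Int.mul_le_mul_of_nonneg_right hnD (Int.natCast_nonneg m)
      have := Int.self_le_toNat ((D + 1 - B) * m)
      have := l.isLt
      nlinarith
  exact ⟨u, hu, fun l => degZ_add_lt_iff.mpr (hred l)⟩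

end Division

section PivotDegrees

variable {m : ℕ} {s δ : Fin m → ℤ} {M : Submodule K[X] (Fin m → K[X])}
  {Q : Fin m → Fin m → K[X]}

def IsPivotDegreeLowerBound (M : Submodule K[X] (Fin m → K[X])) (s δ : Fin m → ℤ) : Prop :=
  ∀ v ∈ M, v ≠ 0 → ∀ k, IsPivotIndex s v k → (δ k : WithBot ℤ) ≤ sdeg s v

lemma isPivotIndex_single (s : Fin m → ℤ) (j : Fin m) {f : K[X]} (hf : f ≠ 0) :
    IsPivotIndex s (Pi.single j f) j := by
  refine (isPivotIndex_of_coeff (d := f.natDegree + s j) (fun l n hn => ?_) (fun l hjl n hn => ?_)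
    (n₀ := f.natDegree) (by simpa using hf) rfl).1
  · obtain rfl | hlj := eq_or_ne l j
    · have := le_natDegree_of_ne_zero (by simpa using hn)
      omega
    · simp [Pi.single_eq_of_ne hlj] at hn
  · simp [Pi.single_eq_of_ne hjl.ne'] at hn

lemma IsOrderedWeakPopov.isPivotDegreeLowerBound_span (hQ : IsOrderedWeakPopov s Q) :
    IsPivotDegreeLowerBound (Submodule.span K[X] (Set.range Q)) s (rowDeg s Q) := by
  intro v hv hv0 k hk
  obtain ⟨c, rfl⟩ := (Submodule.mem_span_range_iff_exists_fun K[X]).mp hv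
  have hc : c ≠ 0 := by
    rintro rfl
    simp at hv0
  obtain ⟨i, hi⟩ := exists_isPivotIndex (s := rowDeg s Q) hc
  obtain ⟨hpiv, hsdeg⟩ := hQ.isPivotIndex_sum_smul hi (hi.apply_ne_zero hc)
  obtain rfl := hk.unique hpiv
  rw [hsdeg, WithBot.coe_le_coe]
  omega

lemma exists_isPivotDegreeLowerBound (s : Fin m → ℤ) {f : K[X]} (hf : f ≠ 0)
    (hfM : ∀ j, Pi.single j f ∈ M) :
    ∃ Q, IsOrderedWeakPopov s Q ∧ (∀ i, Q i ∈ M) ∧ IsPivotDegreeLowerBound M s (rowDeg s Q) := by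
  classical
  have hex : ∀ j, ∃ n, ∃ g ∈ M, IsPivotIndex s g j ∧ g j ≠ 0 ∧ (g j).natDegree = n :=
    fun j => ⟨_, _, hfM j, isPivotIndex_single s j hf, by simpa using hf, rfl⟩
  choose Q hQM hQ hQ0 hQdeg using fun j => Nat.find_spec (hex j)
  refine ⟨Q, fun j => ⟨hQ j, hQ0 j⟩, hQM, fun v hv hv0 k hk => ?_⟩
  have hvk := hk.apply_ne_zero hv0
  have := Nat.find_min' (hex k) ⟨v, hv, hk, hvk, rfl⟩
  rw [hk.sdeg_eq hvk, WithBot.coe_le_coe, rowDeg, hQdeg]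
  omega

lemma IsPivotDegreeLowerBound.eq_zero_of_mem (hM : IsPivotDegreeLowerBound M s δ)
    {r : Fin m → K[X]} (hr : r ∈ M) (hlt : ∀ l, degZ (r l) + s l < δ l) : r = 0 := by
  by_contra hr0
  obtain ⟨k, hk⟩ := exists_isPivotIndex (s := s) hr0
  exact (hlt k).not_ge (hk.1 ▸ hM r hr hr0 k hk)

lemma IsPivotDegreeLowerBound.isPivotIndex_of_mem (hM : IsPivotDegreeLowerBound M s δ)
    {v : Fin m → K[X]} (hv : v ∈ M) {i : Fin m} (hvi : v i ≠ 0)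
    (hlt : ∀ l, l ≠ i → degZ (v l) + s l < δ l) : IsPivotIndex s v i := by
  have hv0 : v ≠ 0 := fun h => hvi (by simp [h])
  obtain ⟨k, hk⟩ := exists_isPivotIndex (s := s) hv0
  obtain rfl | hki := eq_or_ne k i
  · exact hk
  · exact absurd (hk.1 ▸ hM v hv hv0 k hk) (hlt k hki).not_ge

lemma IsPivotDegreeLowerBound.le_rowDeg (hM : IsPivotDegreeLowerBound M s δ)
    (hQ : IsOrderedWeakPopov s Q) (hQM : ∀ i, Q i ∈ M) (i : Fin m) : δ i ≤ rowDeg s Q i := by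
  have := hM (Q i) (hQM i) (fun h => (hQ i).2 (by simp [h])) i (hQ i).1
  rwa [hQ.sdeg_eq, WithBot.coe_le_coe] at this

lemma IsPivotDegreeLowerBound.span_eq (hM : IsPivotDegreeLowerBound M s (rowDeg s Q))
    (hQ : IsOrderedWeakPopov s Q) (hQM : ∀ i, Q i ∈ M) :
    Submodule.span K[X] (Set.range Q) = M := by
  have hle : Submodule.span K[X] (Set.range Q) ≤ M :=
    Submodule.span_le.mpr (Set.range_subset_iff.mpr hQM)
  refine le_antisymm hle fun v hv => ?_
  obtain ⟨u, hu, hred⟩ := hQ.exists_reduced v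
  rwa [sub_eq_zero.mp (hM.eq_zero_of_mem (M.sub_mem hv (hle hu)) hred)]

/-- The rows of the `s`-Popov basis are `X ^ (deg Q i i) e_i` minus its remainder modulo `Q`. -/
theorem IsPivotDegreeLowerBound.exists_isPopov (hM : IsPivotDegreeLowerBound M s (rowDeg s Q))
    (hQ : IsOrderedWeakPopov s Q) (hQM : ∀ i, Q i ∈ M) :
    ∃ P : Matrix (Fin m) (Fin m) K[X], IsPopov s P ∧ (∀ i, P i ∈ M) ∧ rowDeg s P = rowDeg s Q := by
  classical
  choose P hPQ hred using fun i => hQ.exists_reduced (Pi.single i (X ^ (Q i i).natDegree))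
  have hPM : ∀ i, P i ∈ M := fun i => Submodule.span_le.mpr (Set.range_subset_iff.mpr hQM) (hPQ i)
  have hdiag : ∀ i, (P i i).Monic ∧ (P i i).natDegree = (Q i i).natDegree := by
    intro i
    have h := hred i i
    rw [rowDeg, degZ_add_lt_iff_degree_lt, Pi.sub_apply, Pi.single_eq_same] at h
    rw [← degree_X_pow (R := K)] at h
    have hmonic := (monic_X_pow (Q i i).natDegree).sub_of_left h
    have hdeg := degree_sub_eq_left_of_degree_lt h
    rw [sub_sub_cancel] at hmonic hdeg
    exact ⟨hmonic, by rw [natDegree_eq_of_degree_eq hdeg, natDegree_X_pow]⟩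
  have hoff : ∀ i l, l ≠ i → degZ (P i l) + s l < rowDeg s Q l := by
    intro i l hli
    have h := hred i l
    rwa [Pi.sub_apply, Pi.single_eq_of_ne hli, zero_sub, degZ, degree_neg, ← degZ] at h
  have hpiv : ∀ i, IsPivotIndex s (P i) i :=
    fun i => hM.isPivotIndex_of_mem (hPM i) (hdiag i).1.ne_zero (hoff i)
  have hP : IsOrderedWeakPopov s P := fun i => ⟨hpiv i, (hdiag i).1.ne_zero⟩
  refine ⟨P, ⟨hP.det_ne_zero, hpiv, fun i => (hdiag i).1, fun i l hil => ?_⟩, hPM,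
    funext fun i => by simp [rowDeg, (hdiag i).2]⟩
  have h := hoff i l hil.symm
  rwa [rowDeg, ← (hdiag l).2, degZ_add_lt_iff_degree_lt, ← degree_eq_natDegree (hdiag l).1.ne_zero] at h

end PivotDegrees

section Uniqueness

variable {m : ℕ} {s : Fin m → ℤ}

lemma IsPopov.isOrderedWeakPopov {P : Matrix (Fin m) (Fin m) K[X]} (hP : IsPopov s P) :
    IsOrderedWeakPopov s P :=
  fun i => ⟨hP.2.1 i, (hP.2.2.1 i).ne_zero⟩

lemma IsPopov.degree_lt_natDegree {P : Matrix (Fin m) (Fin m) K[X]} (hP : IsPopov s P)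
    {i l : Fin m} (hil : i ≠ l) : (P i l).degree < (P l l).natDegree :=
  degree_eq_natDegree (hP.2.2.1 l).ne_zero ▸ hP.2.2.2 i l hil

theorem IsPopov.eq_of_span_eq {P P' : Matrix (Fin m) (Fin m) K[X]} (hP : IsPopov s P)
    (hP' : IsPopov s P') (h : Submodule.span K[X] (Set.range fun i => P i) =
      Submodule.span K[X] (Set.range fun i => P' i)) : P = P' := by
  set M := Submodule.span K[X] (Set.range fun i => P' i)
  have hPM : ∀ i, P i ∈ M := fun i => h ▸ Submodule.subset_span ⟨i, rfl⟩
  have hP'M : ∀ i, P' i ∈ M := fun i => Submodule.subset_span ⟨i, rfl⟩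
  have hbound : IsPivotDegreeLowerBound M s (rowDeg s P) :=
    h ▸ hP.isOrderedWeakPopov.isPivotDegreeLowerBound_span
  have hbound' := hP'.isOrderedWeakPopov.isPivotDegreeLowerBound_span
  have hdeg : ∀ l, (P l l).natDegree = (P' l l).natDegree := fun l => by
    have := le_antisymm (hbound.le_rowDeg hP'.isOrderedWeakPopov hP'M l)
      (hbound'.le_rowDeg hP.isOrderedWeakPopov hPM l)
    simpa [rowDeg] using this
  funext i
  refine sub_eq_zero.mp (hbound.eq_zero_of_mem (M.sub_mem (hPM i) (hP'M i)) fun l => ?_)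
  unfold rowDeg
  rw [degZ_add_lt_iff_degree_lt, Pi.sub_apply]
  obtain rfl | hil := eq_or_ne i l
  · rw [← degree_eq_natDegree (hP.2.2.1 i).ne_zero]
    refine degree_sub_lt_left ?_ (hP.2.2.1 i).ne_zero
      (by rw [(hP.2.2.1 i).leadingCoeff, (hP'.2.2.1 i).leadingCoeff])
    rw [degree_eq_natDegree (hP.2.2.1 i).ne_zero, degree_eq_natDegree (hP'.2.2.1 i).ne_zero, hdeg]
  · exact (degree_sub_le _ _).trans_lt
      (max_lt (hP.degree_lt_natDegree hil) (hdeg l ▸ hP'.degree_lt_natDegree hil))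

theorem existsUnique_isPopov_basis (s : Fin m → ℤ) {M : Submodule K[X] (Fin m → K[X])}
    {f : K[X]} (hf : f ≠ 0) (hfM : ∀ j, Pi.single j f ∈ M) :
    ∃! P : Matrix (Fin m) (Fin m) K[X], IsPopov s P ∧ LinearIndependent K[X] (fun i => P i) ∧
      Submodule.span K[X] (Set.range fun i => P i) = M := by
  obtain ⟨Q, hQ, hQM, hM⟩ := exists_isPivotDegreeLowerBound s hf hfM
  obtain ⟨P, hP, hPM, hdeg⟩ := hM.exists_isPopov hQ hQM
  have hspan := (hdeg ▸ hM).span_eq hP.isOrderedWeakPopov hPM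
  exact ⟨P, ⟨hP, hP.isOrderedWeakPopov.linearIndependent, hspan⟩,
    fun P' ⟨hP', _, hspan'⟩ => hP'.eq_of_span_eq hP (hspan'.trans hspan.symm)⟩

end Uniqueness

section Interpolation

variable {ι n : Type*} [Fintype ι] [Fintype n] [DecidableEq n]

def interpolants (E : Matrix ι n K) (J : Matrix n n K) : Submodule K[X] (ι → K[X]) where
  carrier := {p | IsInterpolant E J p}
  add_mem' {p q} hp hq := by
    simp only [Set.mem_ofPred_eq, IsInterpolant, Pi.add_apply, map_add, Matrix.vecMul_add,
      Finset.sum_add_distrib] at *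
    rw [hp, hq, add_zero]
  zero_mem' := by simp [IsInterpolant]
  smul_mem' c p hp := by
    simp only [Set.mem_ofPred_eq, IsInterpolant, Pi.smul_apply, smul_eq_mul] at *
    simp_rw [mul_comm c, map_mul, ← Matrix.vecMul_vecMul, ← Matrix.sum_vecMul, hp,
      Matrix.zero_vecMul]

lemma single_charpoly_mem_interpolants [DecidableEq ι] (E : Matrix ι n K) (J : Matrix n n K)
    (j : ι) : Pi.single j J.charpoly ∈ interpolants E J := by
  refine Finset.sum_eq_zero fun i _ => ?_
  rcases eq_or_ne i j with rfl | h
  · simp [Matrix.aeval_self_charpoly]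
  · simp [Pi.single_eq_of_ne h]

end Interpolation

end

theorem existsUnique_popov_interpolation_basis_general {K : Type*} [Field K] {m σ : ℕ}
    (E : Matrix (Fin m) (Fin σ) K) (J : Matrix (Fin σ) (Fin σ) K) (s : Fin m → ℤ) :
    ∃! P : Matrix (Fin m) (Fin m) (Polynomial K),
      IsPopov s P ∧ IsInterpolationBasis E J P := by
  obtain ⟨P, ⟨hP, hind, hspan⟩, huniq⟩ :=
    existsUnique_isPopov_basis s J.charpoly_monic.ne_zero (single_charpoly_mem_interpolants E J)
  exact ⟨P, ⟨hP, hind, congrArg SetLike.coe hspan⟩,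
    fun P' ⟨hP', hind', hspan'⟩ => huniq P' ⟨hP', hind', SetLike.coe_injective hspan'⟩⟩

/-- existence and uniqueness of the interpolation basis for `(E, J)` in
`s`-Popov form. -/
theorem existsUnique_popov_interpolation_basis {K : Type*} [Field K] {m σ : ℕ}
    (hm : 1 ≤ m) (hσ : 1 ≤ σ)
    (E : Matrix (Fin m) (Fin σ) K) (J : Matrix (Fin σ) (Fin σ) K) (s : Fin m → ℤ) :
    ∃! P : Matrix (Fin m) (Fin m) (Polynomial K),
      IsPopov s P ∧ IsInterpolationBasis E J P :=
  existsUnique_popov_interpolation_basis_general E J s
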